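/- arXiv:2109.01224 — 2 statements merged into one kernel-verified Lean document; each statement's English description precedes it below -/
import Mathlib

section
/- (Switched DoS resilience, necessity of the SCC condition) For a switched structured system with modes [A_1],…,[A_z] and defender inputs connectable only to X_def, if the union digraph D([A_1] + … + [A_z]) contains a non-top-linked SCC consisting exclusively of vertices of X_att, then there is no choice of defender input matrices [B_{k,def}] (supported on X_def in every mode) making every state reachable from the defender inputs in the union digraph; hence the switched system is not structurally resilient to the DoS attack. -/
/-- Reachability by directed paths (possibly of length zero). -/
def Reach {V : Type*} (E : V → V → Prop) : V → V → Prop := Relation.ReflTransGen E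

/-- `S` is a strongly connected component of the digraph with edge relation `E`:
a maximal nonempty set of mutually reachable vertices. -/
def IsSCC {V : Type*} (E : V → V → Prop) (S : Set V) : Prop :=
  S.Nonempty ∧ (∀ a ∈ S, ∀ b ∈ S, Reach E a b) ∧
    ∀ T : Set V, S ⊆ T → (∀ a ∈ T, ∀ b ∈ T, Reach E a b) → T = S

/-- A non-top-linked (source) SCC: an SCC with no incoming edge from outside. -/
def NonTopLinked {V : Type*} (E : V → V → Prop) (S : Set V) : Prop :=
  IsSCC E S ∧ ∀ u v, v ∈ S → u ∉ S → ¬ E u v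

theorem Reach.mem_of_noIncoming {V : Type*} {E : V → V → Prop} {S : Set V}
    (hS : ∀ u v, v ∈ S → u ∉ S → ¬ E u v) {a b : V} (h : Reach E a b) (hb : b ∈ S) :
    a ∈ S := by
  induction h using Relation.ReflTransGen.head_induction_on with
  | refl => exact hb
  | head hE _ ih => exact not_not.mp fun ha => hS _ _ ih ha hE

theorem NonTopLinked.mem_of_reach {V : Type*} {E : V → V → Prop} {S : Set V}
    (hS : NonTopLinked E S) {a b : V} (h : Reach E a b) (hb : b ∈ S) : a ∈ S :=
  h.mem_of_noIncoming hS.2 hb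

theorem stmt_16_general {X I : Type*} (z : ℕ) (Ak : Fin z → X → X → Prop)
    (Xdef Xatt : Set X) (hpart : Xdef = Xattᶜ)
    (S : Set X) (hS : NonTopLinked (fun a b => ∃ k, Ak k a b) S) (hSatt : S ⊆ Xatt) :
    ∀ Bdef : Fin z → I → X → Prop, (∀ k i x, Bdef k i x → x ∈ Xdef) →
      ¬ ∀ x : X, ∃ i, ∃ x₀, (∃ k, Bdef k i x₀) ∧
        Reach (fun a b => ∃ k, Ak k a b) x₀ x := by
  intro Bdef hBdef hall
  obtain ⟨s, hs⟩ := hS.1.1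
  obtain ⟨i, x₀, ⟨k, hinput⟩, hreach⟩ := hall s
  have hx₀def : x₀ ∈ Xdef := hBdef k i x₀ hinput
  rw [hpart] at hx₀def
  exact hx₀def (hSatt (hS.mem_of_reach hreach hs))

/-- switched DoS resilience, necessity of the SCC condition: if the union
digraph of the modes has a non-top-linked SCC contained in `X_att`, then no defender input
structures supported on `X_def` make every state reachable from the defender inputs in the
union digraph. -/
theorem stmt_16 {X I : Type*} [Fintype X] (z : ℕ) (Ak : Fin z → X → X → Prop)
    (Xdef Xatt : Set X) (hpart : Xdef = Xattᶜ)
    (S : Set X) (hS : NonTopLinked (fun a b => ∃ k, Ak k a b) S) (hSatt : S ⊆ Xatt) :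
    ∀ Bdef : Fin z → I → X → Prop, (∀ k i x, Bdef k i x → x ∈ Xdef) →
      ¬ ∀ x : X, ∃ i, ∃ x₀, (∃ k, Bdef k i x₀) ∧
        Reach (fun a b => ∃ k, Ak k a b) x₀ x :=
  stmt_16_general z Ak Xdef Xatt hpart S hS hSatt
end

section
/- (Switched DoS resilience, necessity of the matching condition) If every maximum matching of the bipartite graph B([[A_1],…,[A_z]]) of the horizontally concatenated mode matrices leaves some vertex of X_att unmatched, then for all defender input structures [B_{k,def}] supported on X_def, the bipartite graph B([[A_1],…,[A_z],[B_{1,def}],…,[B_{z,def}]]) has no matching covering all n state (right) vertices, so the switched system is not structurally controllable with defender inputs alone. -/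
open scoped Classical

noncomputable section

/-- A set of edges in a bipartite graph (edges from left type `L` to right type `R`)
is a matching if no two distinct edges share a left or a right vertex. -/
def IsMatching {L R : Type*} (M : Finset (L × R)) : Prop :=
  ∀ e ∈ M, ∀ f ∈ M, e ≠ f → e.1 ≠ f.1 ∧ e.2 ≠ f.2

/-- `M` is a matching of the bipartite graph with edge set `Ed`. -/
def IsMatchingOf {L R : Type*} (Ed M : Finset (L × R)) : Prop :=
  M ⊆ Ed ∧ IsMatching M

/-- `M` is a maximum matching of the bipartite graph with edge set `Ed`. -/
def IsMaxMatching {L R : Type*} (Ed M : Finset (L × R)) : Prop :=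
  IsMatchingOf Ed M ∧ ∀ M', IsMatchingOf Ed M' → M'.card ≤ M.card

/-- The right vertices left unmatched by the matching `M`. -/
def unmatchedR {L R : Type*} [Fintype R] (M : Finset (L × R)) : Finset R :=
  Finset.univ.filter (fun r => ∀ e ∈ M, e.2 ≠ r)

/-- The maximum matching number of the bipartite graph with edge set `Ed`. -/
def matchNum {L R : Type*} (Ed : Finset (L × R)) : ℕ :=
  (Ed.powerset.filter IsMatching).sup Finset.card

/-- Bipartite graph of the horizontal concatenation `[[A_1],…,[A_z]]`: one left vertex per
column of each mode's state matrix, right vertices the states. -/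
def concatModes {X : Type*} [DecidableEq X] (z : ℕ) (EA : Fin z → Finset (X × X)) :
    Finset ((Fin z × X) × X) :=
  (Finset.univ : Finset (Fin z)).biUnion
    (fun k => (EA k).image (fun e => ((k, e.1), e.2)))

/-- Bipartite graph of `[[A_1],…,[A_z],[B_1],…,[B_z]]`. -/
def concatModesAB {X I : Type*} [DecidableEq X] [DecidableEq I] (z : ℕ)
    (EA : Fin z → Finset (X × X)) (EB : Fin z → Finset (I × X)) :
    Finset (((Fin z × X) ⊕ (Fin z × I)) × X) :=
  (concatModes z EA).image (fun e => (Sum.inl e.1, e.2)) ∪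
    (Finset.univ : Finset (Fin z)).biUnion
      (fun k => (EB k).image (fun e => (Sum.inr (k, e.1), e.2)))

/-!
Restricting a perfect matching of `B([[A_1],…,[A_z],[B_1],…,[B_z]])` to the state columns gives
a matching of `B([[A_1],…,[A_z]])` that still covers `X_att`, because input columns only reach
`X_def`. Any matching can be turned into a maximum one that covers at least the same right
vertices: repeatedly insert an edge of the given matching reaching an uncovered vertex and drop
the (at most one) edge conflicting with it at the left end. The resulting maximum matching
covers `X_att`, contradicting the hypothesis.
-/

section Matching

variable {L R : Type*}

theorem exists_isMaxMatching (Ed : Finset (L × R)) : ∃ N, IsMaxMatching Ed N := by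
  obtain ⟨N, hN, hmax⟩ := Finset.exists_max_image (Ed.powerset.filter IsMatching) Finset.card
    ⟨∅, by simp [IsMatching]⟩
  simp only [Finset.mem_filter, Finset.mem_powerset] at hN hmax
  exact ⟨N, hN, fun M' hM' => hmax M' hM'⟩

@[simp]
theorem mem_unmatchedR [Fintype R] {M : Finset (L × R)} {x : R} :
    x ∈ unmatchedR M ↔ ∀ e ∈ M, e.2 ≠ x := by
  simp [unmatchedR]

theorem IsMatching.mono {M N : Finset (L × R)} (hN : IsMatching N) (h : M ⊆ N) :
    IsMatching M :=
  fun e he f hf hef => hN e (h he) f (h hf) hef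

theorem IsMatching.insert [DecidableEq L] [DecidableEq R] {N : Finset (L × R)} {e : L × R}
    (hN : IsMatching N) (he : ∀ f ∈ N, e.1 ≠ f.1 ∧ e.2 ≠ f.2) :
    IsMatching (insert e N) := by
  intro g hg h hh hgh
  rw [Finset.mem_insert] at hg hh
  rcases hg with rfl | hg <;> rcases hh with rfl | hh
  · exact absurd rfl hgh
  · exact he h hh
  · exact (he g hg).imp Ne.symm Ne.symm
  · exact hN g hg h hh hgh

variable [DecidableEq L] [DecidableEq R]

theorem IsMatching.card_filter_fst_eq_le_one {N : Finset (L × R)} (hN : IsMatching N) (l : L) :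
    (N.filter (·.1 = l)).card ≤ 1 := by
  refine Finset.card_le_one.mpr fun e he f hf => ?_
  rw [Finset.mem_filter] at he hf
  by_contra hef
  exact (hN e he.1 f hf.1 hef).1 (he.2.trans hf.2.symm)

def exchangeEdge (N : Finset (L × R)) (e : L × R) : Finset (L × R) :=
  insert e (N.filter (·.1 ≠ e.1))

theorem isMatching_exchangeEdge {N : Finset (L × R)} {e : L × R} (hN : IsMatching N)
    (he : e.2 ∉ N.image Prod.snd) : IsMatching (exchangeEdge N e) := by
  refine (hN.mono (Finset.filter_subset _ _)).insert fun f hf => ?_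
  rw [Finset.mem_filter] at hf
  exact ⟨hf.2.symm, fun h => he (Finset.mem_image.mpr ⟨f, hf.1, h.symm⟩)⟩

theorem IsMatching.card_le_card_exchangeEdge {N : Finset (L × R)} {e : L × R}
    (hN : IsMatching N) (he : e.2 ∉ N.image Prod.snd) : N.card ≤ (exchangeEdge N e).card := by
  have heN : e ∉ N.filter (·.1 ≠ e.1) := fun h =>
    he (Finset.mem_image_of_mem _ (Finset.mem_of_mem_filter e h))
  have hsplit := Finset.card_filter_add_card_filter_not (s := N) (fun f => f.1 = e.1)
  rw [exchangeEdge, Finset.card_insert_of_notMem heN]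
  have := hN.card_filter_fst_eq_le_one e.1
  simp only [ne_eq] at hsplit ⊢
  omega

theorem IsMatching.card_sdiff_exchangeEdge_lt {M N : Finset (L × R)} {e : L × R}
    (hM : IsMatching M) (heM : e ∈ M) (heN : e ∉ N) :
    (M \ exchangeEdge N e).card < (M \ N).card := by
  refine Finset.card_lt_card ⟨fun g hg => ?_, fun h => ?_⟩
  · rw [Finset.mem_sdiff, exchangeEdge, Finset.mem_insert, Finset.mem_filter] at hg
    refine Finset.mem_sdiff.mpr ⟨hg.1, fun hgN => hg.2 (Or.inr ⟨hgN, ?_⟩)⟩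
    exact (hM g hg.1 e heM fun hge => hg.2 (Or.inl hge)).1
  · have := h (Finset.mem_sdiff.mpr ⟨heM, heN⟩)
    exact (Finset.mem_sdiff.mp this).2 (Finset.mem_insert_self _ _)

theorem IsMatchingOf.exists_card_le_image_snd_subset {Ed M N : Finset (L × R)}
    (hM : IsMatchingOf Ed M) (hN : IsMatchingOf Ed N) :
    ∃ N', IsMatchingOf Ed N' ∧ N.card ≤ N'.card ∧ M.image Prod.snd ⊆ N'.image Prod.snd := by
  by_cases hsub : M.image Prod.snd ⊆ N.image Prod.snd
  · exact ⟨N, hN, le_rfl, hsub⟩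
  obtain ⟨x, hxM, hxN⟩ := Finset.not_subset.mp hsub
  obtain ⟨e, heM, rfl⟩ := Finset.mem_image.mp hxM
  have hN₁ : IsMatchingOf Ed (exchangeEdge N e) :=
    ⟨Finset.insert_subset (hM.1 heM) ((Finset.filter_subset _ _).trans hN.1),
      isMatching_exchangeEdge hN.2 hxN⟩
  obtain ⟨N', hN', hle, hcov⟩ := hM.exists_card_le_image_snd_subset hN₁
  exact ⟨N', hN', (hN.2.card_le_card_exchangeEdge hxN).trans hle, hcov⟩
termination_by (M \ N).card
decreasing_by
  exact hM.2.card_sdiff_exchangeEdge_lt heM fun h => hxN (Finset.mem_image_of_mem _ h)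

theorem IsMatchingOf.exists_isMaxMatching_image_snd_subset {Ed M : Finset (L × R)}
    (hM : IsMatchingOf Ed M) :
    ∃ N, IsMaxMatching Ed N ∧ M.image Prod.snd ⊆ N.image Prod.snd := by
  obtain ⟨N, hNmax⟩ := exists_isMaxMatching Ed
  obtain ⟨N', hN', hle, hcov⟩ := hM.exists_card_le_image_snd_subset hNmax.1
  exact ⟨N', ⟨hN', fun M' hM' => (hNmax.2 M' hM').trans hle⟩, hcov⟩

end Matching

section Sum

variable {L L' R : Type*}

def inlEdges (M : Finset ((L ⊕ L') × R)) : Finset (L × R) :=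
  M.preimage (Prod.map Sum.inl id) (Sum.inl_injective.prodMap Function.injective_id).injOn

@[simp]
theorem mem_inlEdges {M : Finset ((L ⊕ L') × R)} {e : L × R} :
    e ∈ inlEdges M ↔ (Sum.inl e.1, e.2) ∈ M := by
  simp [inlEdges, Prod.map]

theorem IsMatching.inlEdges {M : Finset ((L ⊕ L') × R)} (hM : IsMatching M) :
    IsMatching (inlEdges M) := by
  intro e he f hf hef
  rw [mem_inlEdges] at he hf
  have := hM _ he _ hf fun h => hef (Prod.ext (Sum.inl_injective (congrArg (·.1) h))
    (congrArg (·.2) h))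
  exact ⟨fun h => this.1 (congrArg Sum.inl h), this.2⟩

end Sum

section Concat

variable {X I : Type*} [DecidableEq X] [DecidableEq I] {z : ℕ}
  {EA : Fin z → Finset (X × X)} {EB : Fin z → Finset (I × X)}

theorem inlEdges_subset_concatModes {M : Finset (((Fin z × X) ⊕ (Fin z × I)) × X)}
    (hM : M ⊆ concatModesAB z EA EB) : inlEdges M ⊆ concatModes z EA := by
  intro e he
  simpa [concatModesAB] using hM (mem_inlEdges.mp he)

theorem snd_mem_of_inr_mem_concatModesAB {k : Fin z} {i : I} {x : X}
    (h : (Sum.inr (k, i), x) ∈ concatModesAB z EA EB) : (i, x) ∈ EB k := by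
  simpa [concatModesAB, concatModes] using h

end Concat

/-- switched DoS resilience, necessity of the matching condition: if every
maximum matching of `B([[A_1],…,[A_z]])` leaves some `X_att` vertex unmatched, then for
all defender input structures supported on `X_def`, the concatenated bipartite graph has
no matching covering all state vertices. -/
theorem stmt_17 {X I : Type*} [Fintype X] (z : ℕ) (EA : Fin z → Finset (X × X))
    (Xdef Xatt : Set X) (hpart : Xdef = Xattᶜ)
    (hA : ∀ M : Finset ((Fin z × X) × X), IsMaxMatching (concatModes z EA) M →
      ∃ x ∈ unmatchedR M, x ∈ Xatt) :
    ∀ EB : Fin z → Finset (I × X), (∀ k, ∀ e ∈ EB k, e.2 ∈ Xdef) →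
      ¬ ∃ M : Finset (((Fin z × X) ⊕ (Fin z × I)) × X),
          IsMatchingOf (concatModesAB z EA EB) M ∧ ∀ x : X, ∃ e ∈ M, e.2 = x := by
  rintro EB hEB ⟨M, ⟨hMsub, hM⟩, hcover⟩
  have hMA : IsMatchingOf (concatModes z EA) (inlEdges M) :=
    ⟨inlEdges_subset_concatModes hMsub, hM.inlEdges⟩
  -- An attacked state cannot be matched to a defender input, so `M` matches it to a state column.
  have hatt : ∀ x ∈ Xatt, x ∈ (inlEdges M).image Prod.snd := by
    intro x hx
    obtain ⟨⟨l | ⟨k, i⟩, x⟩, he, rfl⟩ := hcover x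
    · exact Finset.mem_image_of_mem Prod.snd (mem_inlEdges (e := (l, x)).mpr he)
    · have := hEB k _ (snd_mem_of_inr_mem_concatModesAB (hMsub he))
      rw [hpart] at this
      exact absurd hx this
  obtain ⟨N, hN, hcov⟩ := hMA.exists_isMaxMatching_image_snd_subset
  obtain ⟨x, hxN, hx⟩ := hA N hN
  obtain ⟨e, he, hex⟩ := Finset.mem_image.mp (hcov (hatt x hx))
  exact mem_unmatchedR.mp hxN e he hex
end
end
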